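/- arXiv:1702.06618 — 8 statements merged into one kernel-verified Lean document; each statement's English description precedes it below -/
import Mathlib

section
/- Let X, Y be pointed metric spaces, u : ℝ≥0 → ℝ≥0 nondecreasing, and let f : X → Y satisfy, for some R₀, C > 0: |f(x)| ≤ max(|x|, R₀) for all x, and d(f(x), f(x')) ≥ C·d(x,x') − u(max(|x|, |x'|)) for all x, x'. Then for every n ≥ R₀, the cardinality b_Y(n) of the closed centered n-ball of Y satisfies b_Y(n) ≥ b_X(n) / b^u_X(u(n)/C), where b_X(n) is the cardinality of the closed centered n-ball of X and b^u_X(r) is the supremum of cardinalities of all closed r-balls in X. -/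
universe u

/-! The map `f` sends the closed `n`-ball of `X` into the closed `n`-ball of `Y`, and by the
expansion inequality two points of the `n`-ball with the same image are at distance at most
`u n / C`. So every fiber of `f` over the `n`-ball of `Y` fits in a single closed
`u n / C`-ball. -/

open Cardinal Metric

theorem Cardinal.mk_le_iSup_mk_closedBall_of_dist_le {X : Type u} [PseudoMetricSpace X]
    {s : Set X} {r : ℝ} (hs : ∀ x ∈ s, ∀ x' ∈ s, dist x x' ≤ r) :
    #s ≤ ⨆ x : X, #(closedBall x r) := by
  rcases s.eq_empty_or_nonempty with rfl | ⟨x, hx⟩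
  · simp
  have hsub : s ⊆ closedBall x r := fun x' hx' => mem_closedBall.2 (hs x' hx' x hx)
  exact (mk_le_mk_of_subset hsub).trans (le_ciSup bddAbove_of_small x)

theorem stmt4_general {X Y : Type u} [MetricSpace X] [MetricSpace Y] (x₀ : X) (y₀ : Y)
    (u : ℝ → ℝ) (hu : Monotone u)
    (f : X → Y) (R₀ C : ℝ) (hC : 0 < C)
    (hrad : ∀ x, dist (f x) y₀ ≤ max (dist x x₀) R₀)
    (hexp : ∀ x x', C * dist x x' - u (max (dist x x₀) (dist x' x₀)) ≤ dist (f x) (f x'))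
    (n : ℝ) (hn : R₀ ≤ n) :
    Cardinal.mk (Metric.closedBall x₀ n) ≤
      Cardinal.mk (Metric.closedBall y₀ n) *
        ⨆ x : X, Cardinal.mk (Metric.closedBall x (u n / C)) := by
  have hmaps : Set.MapsTo f (closedBall x₀ n) (closedBall y₀ n) := fun x hx =>
    mem_closedBall.2 <| (hrad x).trans (max_le (mem_closedBall.1 hx) hn)
  have hfiber : ∀ x ∈ closedBall x₀ n, ∀ x' ∈ closedBall x₀ n, f x = f x' →
      dist x x' ≤ u n / C := by
    intro x hx x' hx' hxx'
    have hdist := hexp x x'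
    rw [hxx', dist_self] at hdist
    have hun : u (max (dist x x₀) (dist x' x₀)) ≤ u n := hu (max_le hx hx')
    rw [le_div_iff₀ hC]
    linarith
  refine mk_le_mk_mul_of_mk_preimage_le (hmaps.restrict f _ _) fun y => ?_
  calc #(hmaps.restrict f _ _ ⁻¹' {y})
      = #((↑) '' (hmaps.restrict f _ _ ⁻¹' {y}) : Set X) :=
        (mk_image_eq Subtype.val_injective).symm
    _ ≤ ⨆ x : X, #(closedBall x (u n / C)) := by
      apply mk_le_iSup_mk_closedBall_of_dist_le
      rintro _ ⟨x, hx, rfl⟩ _ ⟨x', hx', rfl⟩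
      exact hfiber x x.2 x' x'.2 (congrArg Subtype.val (hx.trans hx'.symm))

/-- Ball-counting inequality: `b_X(n) ≤ b_Y(n) · b^u_X(u(n)/C)` (the division
form of `b_Y(n) ≥ b_X(n)/b^u_X(u(n)/C)`, stated multiplicatively so as to make
sense for arbitrary cardinals). -/
theorem stmt4 {X Y : Type u} [MetricSpace X] [MetricSpace Y] (x₀ : X) (y₀ : Y)
    (u : ℝ → ℝ) (hu : Monotone u) (hu0 : ∀ r, 0 ≤ u r)
    (f : X → Y) (R₀ C : ℝ) (hR₀ : 0 < R₀) (hC : 0 < C)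
    (hrad : ∀ x, dist (f x) y₀ ≤ max (dist x x₀) R₀)
    (hexp : ∀ x x', C * dist x x' - u (max (dist x x₀) (dist x' x₀)) ≤ dist (f x) (f x'))
    (n : ℝ) (hn : R₀ ≤ n) :
    Cardinal.mk (Metric.closedBall x₀ n) ≤
      Cardinal.mk (Metric.closedBall y₀ n) *
        ⨆ x : X, Cardinal.mk (Metric.closedBall x (u n / C)) :=
  stmt4_general x₀ y₀ u hu f R₀ C hC hrad hexp n hn
end

section
/- Let X be a pointed metric space all of whose centered balls are finite, with uniform exponentially bounded growth: there exist α > 0 and R₁ such that b^u_X(n) ≤ exp(α·n) for all n ≥ R₁. Suppose there is a map f : X → Y to a pointed metric space Y with finite centered balls, satisfying |f(x)| ≤ max(|x|, R₀) and d(f(x),f(x')) ≥ C·d(x,x') − u(max(|x|,|x'|)) for a nondecreasing sublinear function u (i.e., u(n)/n → 0). If Y has subexponential growth (b_Y(n)^{1/n} → 1), then X has subexponential growth (b_X(n)^{1/n} → 1). -/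
/-!
Two points of the ball of radius `n` with the same image are at distance at most `u(n)/C`,
so every fibre of `f` over the ball lies in a ball of radius `M(n) = max (u(n)/C) R₁`, which has
at most `exp(α M(n))` points. Since `f` maps the ball of radius `n ≥ R₀` into the ball of radius
`n` around `y₀`, this gives `b_X(n) ≤ exp(α M(n)) b_Y(n)`, and `M(n)/n → 0` by sublinearity.
-/

open Filter

theorem Set.ncard_le_mul_ncard_of_mapsTo {α β : Type*} {s : Set α} {t : Set β} {f : α → β}
    (hs : s.Finite) (ht : t.Finite) (hf : Set.MapsTo f s t) (n : ℕ)
    (hn : ∀ a ∈ s, {a' ∈ s | f a' = f a}.ncard ≤ n) : s.ncard ≤ n * t.ncard := by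
  classical
  rw [Set.ncard_eq_toFinset_card s hs, Set.ncard_eq_toFinset_card t ht]
  refine Finset.card_le_mul_card_image_of_maps_to
    (fun a ha => by simpa using hf (by simpa using ha)) n fun b _ => ?_
  by_cases hb : ∃ a ∈ s, f a = b
  · obtain ⟨a, ha, rfl⟩ := hb
    calc _ = {a' ∈ s | f a' = f a}.ncard := by
            rw [← Set.ncard_coe_finset]; congr 1; ext; simp
      _ ≤ n := hn a ha
  · rw [Finset.filter_eq_empty_iff.mpr fun a ha hab => hb ⟨a, by simpa using ha, hab⟩]
    simp

theorem tendsto_rpow_one_div_of_le_exp_mul {a b g : ℕ → ℝ} (ha : ∀ n, 1 ≤ a n)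
    (hle : ∀ᶠ n in atTop, a n ≤ Real.exp (g n) * b n)
    (hg : Tendsto (fun n => g n / n) atTop (nhds 0))
    (hb : Tendsto (fun n => b n ^ (1 / (n : ℝ))) atTop (nhds 1)) :
    Tendsto (fun n => a n ^ (1 / (n : ℝ))) atTop (nhds 1) := by
  have hupper : Tendsto (fun n => Real.exp (g n / n) * b n ^ (1 / (n : ℝ))) atTop (nhds 1) := by
    simpa using (Real.continuous_exp.tendsto 0 |>.comp hg).mul hb
  refine tendsto_of_tendsto_of_tendsto_of_le_of_le' tendsto_const_nhds hupper
    (Eventually.of_forall fun n => Real.one_le_rpow (ha n) (by positivity)) ?_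
  filter_upwards [hle] with n hn
  have hb0 : 0 ≤ b n :=
    (pos_of_mul_pos_right ((zero_lt_one.trans_le (ha n)).trans_le hn) (Real.exp_pos _).le).le
  calc a n ^ (1 / (n : ℝ)) ≤ (Real.exp (g n) * b n) ^ (1 / (n : ℝ)) :=
        Real.rpow_le_rpow (zero_le_one.trans (ha n)) hn (by positivity)
    _ = Real.exp (g n / n) * b n ^ (1 / (n : ℝ)) := by
        rw [Real.mul_rpow (Real.exp_pos _).le hb0, ← Real.exp_mul, mul_one_div]

theorem tendsto_max_div_const_div_atTop_nhds_zero {u : ℝ → ℝ}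
    (hu : Tendsto (fun r => u r / r) atTop (nhds 0)) (C R : ℝ) :
    Tendsto (fun n : ℕ => max (u n / C) R / n) atTop (nhds 0) := by
  have hmax : Tendsto (fun n : ℕ => max (u n / n / C) (R / n)) atTop (nhds 0) := by
    simpa using ((hu.comp tendsto_natCast_atTop_atTop).div_const C).max
      (tendsto_const_div_atTop_nhds_zero_nat R)
  refine hmax.congr' ?_
  filter_upwards [eventually_gt_atTop 0] with n hn
  rw [div_right_comm, max_div_div_right (Nat.cast_pos.2 hn).le]

section SublinearlyExpansive

variable {X Y : Type*} [PseudoMetricSpace X] [PseudoMetricSpace Y] {x₀ : X} {y₀ : Y}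
  {u : ℝ → ℝ} {f : X → Y} {C : ℝ}

theorem dist_le_of_map_eq (hu : Monotone u) (hC : 0 < C)
    (hexp : ∀ x x', C * dist x x' - u (max (dist x x₀) (dist x' x₀)) ≤ dist (f x) (f x'))
    {r : ℝ} {x x' : X} (hx : dist x x₀ ≤ r) (hx' : dist x' x₀ ≤ r) (h : f x = f x') :
    dist x x' ≤ u r / C := by
  rw [le_div_iff₀' hC]
  have := hexp x x'
  rw [h, dist_self] at this
  linarith [hu (max_le hx hx')]

theorem card_closedBall_le_exp_mul_card_closedBall {α R₀ R₁ n : ℝ}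
    (hXfin : ∀ (x : X) (r : ℝ), (Metric.closedBall x r).Finite)
    (hYfin : (Metric.closedBall y₀ n).Finite)
    (hUEB : ∀ (x : X) (r : ℝ), R₁ ≤ r →
      (Nat.card (Metric.closedBall x r) : ℝ) ≤ Real.exp (α * r))
    (hu : Monotone u) (hC : 0 < C)
    (hrad : ∀ x, dist (f x) y₀ ≤ max (dist x x₀) R₀)
    (hexp : ∀ x x', C * dist x x' - u (max (dist x x₀) (dist x' x₀)) ≤ dist (f x) (f x'))
    (hn : R₀ ≤ n) :
    (Nat.card (Metric.closedBall x₀ n) : ℝ) ≤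
      Real.exp (α * max (u n / C) R₁) * Nat.card (Metric.closedBall y₀ n) := by
  set M := max (u n / C) R₁
  have hfibre : ∀ x ∈ Metric.closedBall x₀ n,
      {x' ∈ Metric.closedBall x₀ n | f x' = f x}.ncard ≤ ⌊Real.exp (α * M)⌋₊ := by
    intro x hx
    refine Nat.le_floor ?_
    calc ({x' ∈ Metric.closedBall x₀ n | f x' = f x}.ncard : ℝ)
        ≤ (Metric.closedBall x M).ncard := by
          refine mod_cast Set.ncard_le_ncard (fun x' ⟨hx', hfx⟩ => ?_) (hXfin x M)
          exact (dist_le_of_map_eq hu hC hexp hx' hx hfx).trans (le_max_left _ _)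
      _ ≤ Real.exp (α * M) := by
          simpa [Nat.card_coe_set_eq] using hUEB x M (le_max_right _ _)
  have hmaps : Set.MapsTo f (Metric.closedBall x₀ n) (Metric.closedBall y₀ n) :=
    fun x hx => (hrad x).trans (max_le hx hn)
  rw [Nat.card_coe_set_eq, Nat.card_coe_set_eq]
  calc ((Metric.closedBall x₀ n).ncard : ℝ)
      ≤ ((⌊Real.exp (α * M)⌋₊ * (Metric.closedBall y₀ n).ncard : ℕ) : ℝ) :=
        mod_cast Set.ncard_le_mul_ncard_of_mapsTo (hXfin x₀ n) hYfin hmaps _ hfibre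
    _ ≤ Real.exp (α * M) * (Metric.closedBall y₀ n).ncard := by
        push_cast
        gcongr
        exact Nat.floor_le (Real.exp_pos _).le

end SublinearlyExpansive

theorem stmt5_general {X Y : Type*} [MetricSpace X] [MetricSpace Y] (x₀ : X) (y₀ : Y)
    (hXfin : ∀ (x : X) (r : ℝ), (Metric.closedBall x r).Finite)
    (hYfin : ∀ r : ℝ, (Metric.closedBall y₀ r).Finite)
    (α R₁ : ℝ)
    (hUEB : ∀ (x : X) (n : ℝ), R₁ ≤ n →
      (Nat.card (Metric.closedBall x n) : ℝ) ≤ Real.exp (α * n))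
    (u : ℝ → ℝ) (hu_mono : Monotone u)
    (hu_sub : Tendsto (fun n => u n / n) atTop (nhds 0))
    (f : X → Y) (R₀ C : ℝ) (hC : 0 < C)
    (hrad : ∀ x, dist (f x) y₀ ≤ max (dist x x₀) R₀)
    (hexp : ∀ x x', C * dist x x' - u (max (dist x x₀) (dist x' x₀)) ≤ dist (f x) (f x'))
    (hY : Tendsto (fun n : ℕ =>
      (Nat.card (Metric.closedBall y₀ (n : ℝ)) : ℝ) ^ (1 / (n : ℝ))) atTop (nhds 1)) :
    Tendsto (fun n : ℕ =>
      (Nat.card (Metric.closedBall x₀ (n : ℝ)) : ℝ) ^ (1 / (n : ℝ))) atTop (nhds 1) := by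
  have hball : ∀ n : ℕ, 1 ≤ (Nat.card (Metric.closedBall x₀ (n : ℝ)) : ℝ) := fun n => by
    have := (hXfin x₀ n).to_subtype
    have : Nonempty (Metric.closedBall x₀ (n : ℝ)) :=
      ⟨⟨x₀, Metric.mem_closedBall_self n.cast_nonneg⟩⟩
    exact mod_cast Nat.card_pos
  have hexponent : Tendsto (fun n : ℕ => α * max (u n / C) R₁ / n) atTop (nhds 0) := by
    simpa [mul_div_assoc] using (tendsto_max_div_const_div_atTop_nhds_zero hu_sub C R₁).const_mul α
  refine tendsto_rpow_one_div_of_le_exp_mul hball ?_ hexponent hY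
  filter_upwards [eventually_ge_atTop ⌈R₀⌉₊] with n hn
  exact card_closedBall_le_exp_mul_card_closedBall hXfin (hYfin n) hUEB hu_mono hC hrad hexp
    (Nat.ceil_le.1 hn)

/-- Subexponential growth passes from the target to the source along a radially
controlled, sublinearly expansive map, assuming uniform exponentially bounded
growth of the source. -/
theorem stmt5 {X Y : Type*} [MetricSpace X] [MetricSpace Y] (x₀ : X) (y₀ : Y)
    (hXfin : ∀ (x : X) (r : ℝ), (Metric.closedBall x r).Finite)
    (hYfin : ∀ r : ℝ, (Metric.closedBall y₀ r).Finite)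
    (α R₁ : ℝ) (hα : 0 < α)
    (hUEB : ∀ (x : X) (n : ℝ), R₁ ≤ n →
      (Nat.card (Metric.closedBall x n) : ℝ) ≤ Real.exp (α * n))
    (u : ℝ → ℝ) (hu_mono : Monotone u) (hu0 : ∀ r, 0 ≤ u r)
    (hu_sub : Tendsto (fun n => u n / n) atTop (nhds 0))
    (f : X → Y) (R₀ C : ℝ) (hR₀ : 0 < R₀) (hC : 0 < C)
    (hrad : ∀ x, dist (f x) y₀ ≤ max (dist x x₀) R₀)
    (hexp : ∀ x x', C * dist x x' - u (max (dist x x₀) (dist x' x₀)) ≤ dist (f x) (f x'))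
    (hY : Tendsto (fun n : ℕ =>
      (Nat.card (Metric.closedBall y₀ (n : ℝ)) : ℝ) ^ (1 / (n : ℝ))) atTop (nhds 1)) :
    Tendsto (fun n : ℕ =>
      (Nat.card (Metric.closedBall x₀ (n : ℝ)) : ℝ) ^ (1 / (n : ℝ))) atTop (nhds 1) :=
  stmt5_general x₀ y₀ hXfin hYfin α R₁ hUEB u hu_mono hu_sub f R₀ C hC hrad hexp hY
end

section
/- (Ghys–Harpe) Let X be a set and ρ : X × X → ℝ≥0 a kernel such that for some λ ∈ [1, √2] and all x, y, z ∈ X: ρ(x,z) ≤ λ·max(ρ(x,y), ρ(y,z)). Let ρ̂(x,y) be the infimum over all n ≥ 1 and all finite chains x = x₀, x₁, …, xₙ = y of ∑ᵢ ρ(x_{i−1}, xᵢ). Then (3 − 2λ)·ρ(x,y) ≤ ρ̂(x,y) ≤ ρ(x,y) for all x, y ∈ X. -/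
/-- The largest subadditive kernel below `ρ`, defined as the chain infimum. -/
noncomputable def chainInf {X : Type*} (ρ : X → X → ℝ) (a b : X) : ℝ :=
  sInf {s : ℝ | ∃ (n : ℕ) (x : ℕ → X), 1 ≤ n ∧ x 0 = a ∧ x n = b ∧
    s = ∑ i ∈ Finset.range n, ρ (x i) (x (i + 1))}

lemma ghys_key {X : Type*} (ρ : X → X → ℝ) (hρ : ∀ x y, 0 ≤ ρ x y)
    (lam : ℝ) (hl1 : 1 ≤ lam) (hsq : lam ^ 2 ≤ 2)
    (hquasi : ∀ x y z, ρ x z ≤ lam * max (ρ x y) (ρ y z)) :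
    ∀ n, 1 ≤ n → ∀ x : ℕ → X,
      (3 - 2 * lam) * ρ (x 0) (x n) ≤ ∑ i ∈ Finset.range n, ρ (x i) (x (i + 1)) := by
  have hlam0 : (0:ℝ) ≤ lam := by linarith
  have hlam2 : lam ≤ 2 := by nlinarith
  have hc : 0 < 3 - 2 * lam := by nlinarith
  have hlin : (3 - 2 * lam) * lam ≤ 1 := by
    nlinarith [mul_nonneg (by linarith : (0:ℝ) ≤ lam - 1) (by linarith : (0:ℝ) ≤ 2*lam - 1)]
  have hcube : (3 - 2 * lam) * lam ^ 2 ≤ 1 := by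
    nlinarith [mul_nonneg (sq_nonneg (lam - 1)) (by linarith : (0:ℝ) ≤ 2*lam + 1)]
  intro n
  induction n using Nat.strong_induction_on with
  | _ n ih =>
  intro hn x
  obtain ⟨m, rfl⟩ : ∃ m, n = m + 1 := ⟨n - 1, by omega⟩
  rcases Nat.eq_zero_or_pos m with rfl | hm
  · norm_num [Finset.sum_range_one]
    nlinarith [hρ (x 0) (x 1)]
  classical
  set S := ∑ i ∈ Finset.range (m + 1), ρ (x i) (x (i + 1)) with hSdef
  have hS0 : 0 ≤ S := Finset.sum_nonneg fun i _ => hρ _ _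
  set P : ℕ → Prop := fun k => ∑ i ∈ Finset.range k, ρ (x i) (x (i + 1)) ≤ S / 2 with hPdef
  set k := Nat.findGreatest P m with hkdef
  have hk_le : k ≤ m := Nat.findGreatest_le m
  have hPk : P k := Nat.findGreatest_spec (Nat.zero_le m) (by simp [hPdef]; linarith)
  have hgt : ∀ j, k < j → j ≤ m → ¬ P j := fun j h1 h2 => Nat.findGreatest_is_greatest h1 h2
  rcases Nat.eq_zero_or_pos k with hk0 | hk1
  · -- k = 0 : ρ(x0,x1) > S/2
    have hnP1 : ¬ P 1 := hgt 1 (by omega) (by omega)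
    simp only [hPdef, Finset.sum_range_one] at hnP1
    push_neg at hnP1
    have hsplit : S = ρ (x 0) (x 1) + ∑ i ∈ Finset.range m, ρ (x (1 + i)) (x (1 + i + 1)) := by
      rw [hSdef, Nat.add_comm m 1, Finset.sum_range_add, Finset.sum_range_one]
    have hT0 : 0 ≤ ∑ i ∈ Finset.range m, ρ (x (1 + i)) (x (1 + i + 1)) :=
      Finset.sum_nonneg fun i _ => hρ _ _
    have hih : (3 - 2 * lam) * ρ (x 1) (x (1 + m))
        ≤ ∑ i ∈ Finset.range m, ρ (x (1 + i)) (x (1 + i + 1)) :=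
      ih m (by omega) hm (fun i => x (1 + i))
    have hxm : x (1 + m) = x (m + 1) := by rw [Nat.add_comm]
    rw [hxm] at hih
    have hq := hquasi (x 0) (x 1) (x (m + 1))
    rcases max_cases (ρ (x 0) (x 1)) (ρ (x 1) (x (m + 1))) with ⟨hmx, _⟩ | ⟨hmx, _⟩ <;>
      rw [hmx] at hq
    · have e1 := mul_le_mul_of_nonneg_left hq hc.le
      have e2 := mul_le_mul_of_nonneg_left (show ρ (x 0) (x 1) ≤ S by linarith)
        (mul_nonneg hc.le hlam0)
      have e3 := mul_le_mul_of_nonneg_right hlin hS0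
      linarith
    · have e1 := mul_le_mul_of_nonneg_left hq hc.le
      have e2 := mul_le_mul_of_nonneg_left
        (show (3 - 2 * lam) * ρ (x 1) (x (m + 1)) ≤ S / 2 by linarith) hlam0
      have e3 := mul_le_mul_of_nonneg_right hlam2 (show (0:ℝ) ≤ S / 2 by linarith)
      linarith
  rcases Nat.lt_or_ge k m with hkm | hkm
  · -- middle case 1 ≤ k < m
    obtain ⟨j, hj⟩ : ∃ j, m = k + j := ⟨m - k, by omega⟩
    have hj1 : 1 ≤ j := by omega
    have hnP : ¬ P (k + 1) := hgt (k + 1) (by omega) (by omega)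
    simp only [hPdef] at hnP hPk
    push_neg at hnP
    have hsplit : S = (∑ i ∈ Finset.range (k + 1), ρ (x i) (x (i + 1)))
        + ∑ i ∈ Finset.range j, ρ (x (k + 1 + i)) (x (k + 1 + i + 1)) := by
      rw [hSdef, show m + 1 = (k + 1) + j by omega, Finset.sum_range_add]
    have hheadsucc : ∑ i ∈ Finset.range (k + 1), ρ (x i) (x (i + 1))
        = (∑ i ∈ Finset.range k, ρ (x i) (x (i + 1))) + ρ (x k) (x (k + 1)) :=
      Finset.sum_range_succ _ _
    have hT0 : 0 ≤ ∑ i ∈ Finset.range j, ρ (x (k + 1 + i)) (x (k + 1 + i + 1)) :=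
      Finset.sum_nonneg fun i _ => hρ _ _
    have hH0 : 0 ≤ ∑ i ∈ Finset.range k, ρ (x i) (x (i + 1)) :=
      Finset.sum_nonneg fun i _ => hρ _ _
    have hTle : ∑ i ∈ Finset.range j, ρ (x (k + 1 + i)) (x (k + 1 + i + 1)) ≤ S / 2 := by
      linarith
    have hmid : ρ (x k) (x (k + 1)) ≤ S := by linarith
    have hih1 := ih k (by omega) hk1 x
    have hih2 : (3 - 2 * lam) * ρ (x (k + 1)) (x (k + 1 + j))
        ≤ ∑ i ∈ Finset.range j, ρ (x (k + 1 + i)) (x (k + 1 + i + 1)) :=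
      ih j (by omega) hj1 (fun i => x (k + 1 + i))
    have hxm : x (k + 1 + j) = x (m + 1) := by congr 1; omega
    rw [hxm] at hih2
    have hq1 := hquasi (x 0) (x k) (x (m + 1))
    have hq2 := hquasi (x k) (x (k + 1)) (x (m + 1))
    rcases max_cases (ρ (x 0) (x k)) (ρ (x k) (x (m + 1))) with ⟨hmx, _⟩ | ⟨hmx, _⟩ <;>
      rw [hmx] at hq1
    · have e1 := mul_le_mul_of_nonneg_left hq1 hc.le
      have e2 := mul_le_mul_of_nonneg_left
        (show (3 - 2 * lam) * ρ (x 0) (x k) ≤ S / 2 by linarith) hlam0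
      have e3 := mul_le_mul_of_nonneg_right hlam2 (show (0:ℝ) ≤ S / 2 by linarith)
      linarith
    · rcases max_cases (ρ (x k) (x (k + 1))) (ρ (x (k + 1)) (x (m + 1))) with
        ⟨hmx2, _⟩ | ⟨hmx2, _⟩ <;> rw [hmx2] at hq2
      · have hub : ρ (x 0) (x (m + 1)) ≤ lam ^ 2 * ρ (x k) (x (k + 1)) := by
          calc ρ (x 0) (x (m + 1)) ≤ lam * ρ (x k) (x (m + 1)) := hq1
          _ ≤ lam * (lam * ρ (x k) (x (k + 1))) := mul_le_mul_of_nonneg_left hq2 hlam0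
          _ = lam ^ 2 * ρ (x k) (x (k + 1)) := by ring
        have e1 := mul_le_mul_of_nonneg_left hub hc.le
        have e2 := mul_le_mul_of_nonneg_left hmid
          (mul_nonneg hc.le (sq_nonneg lam))
        have e3 := mul_le_mul_of_nonneg_right hcube hS0
        linarith
      · have hub : ρ (x 0) (x (m + 1)) ≤ lam ^ 2 * ρ (x (k + 1)) (x (m + 1)) := by
          calc ρ (x 0) (x (m + 1)) ≤ lam * ρ (x k) (x (m + 1)) := hq1
          _ ≤ lam * (lam * ρ (x (k + 1)) (x (m + 1))) := mul_le_mul_of_nonneg_left hq2 hlam0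
          _ = lam ^ 2 * ρ (x (k + 1)) (x (m + 1)) := by ring
        have e1 := mul_le_mul_of_nonneg_left hub hc.le
        have e2 := mul_le_mul_of_nonneg_left
          (show (3 - 2 * lam) * ρ (x (k + 1)) (x (m + 1)) ≤ S / 2 by linarith) (sq_nonneg lam)
        have e3 := mul_le_mul_of_nonneg_right hsq (show (0:ℝ) ≤ S / 2 by linarith)
        linarith
  · -- k = m
    have hkm' : k = m := le_antisymm hk_le hkm
    rw [hkm'] at hPk hk1
    simp only [hPdef] at hPk
    have hsplit : S = (∑ i ∈ Finset.range m, ρ (x i) (x (i + 1))) + ρ (x m) (x (m + 1)) := by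
      rw [hSdef, Finset.sum_range_succ]
    have hH0 : 0 ≤ ∑ i ∈ Finset.range m, ρ (x i) (x (i + 1)) :=
      Finset.sum_nonneg fun i _ => hρ _ _
    have hih1 := ih m (by omega) hk1 x
    have hq := hquasi (x 0) (x m) (x (m + 1))
    rcases max_cases (ρ (x 0) (x m)) (ρ (x m) (x (m + 1))) with ⟨hmx, _⟩ | ⟨hmx, _⟩ <;>
      rw [hmx] at hq
    · have e1 := mul_le_mul_of_nonneg_left hq hc.le
      have e2 := mul_le_mul_of_nonneg_left
        (show (3 - 2 * lam) * ρ (x 0) (x m) ≤ S / 2 by linarith) hlam0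
      have e3 := mul_le_mul_of_nonneg_right hlam2 (show (0:ℝ) ≤ S / 2 by linarith)
      linarith
    · have e1 := mul_le_mul_of_nonneg_left hq hc.le
      have e2 := mul_le_mul_of_nonneg_left (show ρ (x m) (x (m + 1)) ≤ S by linarith)
        (mul_nonneg hc.le hlam0)
      have e3 := mul_le_mul_of_nonneg_right hlin hS0
      linarith

/-- Ghys–Harpe lemma: for a kernel satisfying the quasi-ultrametric inequality
with constant `λ ∈ [1, √2]`, the chain infimum satisfies
`(3 − 2λ)·ρ ≤ ρ̂ ≤ ρ`. -/
theorem stmt6 {X : Type*} (ρ : X → X → ℝ) (hρ : ∀ x y, 0 ≤ ρ x y)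
    (lam : ℝ) (hl1 : 1 ≤ lam) (hl2 : lam ≤ Real.sqrt 2)
    (hquasi : ∀ x y z, ρ x z ≤ lam * max (ρ x y) (ρ y z)) (a b : X) :
    (3 - 2 * lam) * ρ a b ≤ chainInf ρ a b ∧ chainInf ρ a b ≤ ρ a b := by
  have hsq : lam ^ 2 ≤ 2 := by
    have h2 : Real.sqrt 2 ^ 2 = 2 := Real.sq_sqrt (by norm_num)
    nlinarith [Real.sqrt_nonneg 2]
  have hmem : ρ a b ∈ {s : ℝ | ∃ (n : ℕ) (x : ℕ → X), 1 ≤ n ∧ x 0 = a ∧ x n = b ∧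
      s = ∑ i ∈ Finset.range n, ρ (x i) (x (i + 1))} := by
    refine ⟨1, fun i => if i = 0 then a else b, le_refl 1, by simp, by simp, ?_⟩
    simp [Finset.sum_range_one]
  constructor
  · apply le_csInf ⟨_, hmem⟩
    rintro s ⟨n, x, hn, hx0, hxn, rfl⟩
    have := ghys_key ρ hρ lam hl1 hsq hquasi n hn x
    rw [hx0, hxn] at this
    exact this
  · apply csInf_le
    · refine ⟨0, ?_⟩
      rintro s ⟨n, x, hn, hx0, hxn, rfl⟩
      exact Finset.sum_nonneg fun i _ => hρ _ _
    · exact hmem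
end

section
/- Being large-scale contractable is a quasi-isometry invariant: if X is a metric space admitting a self-quasi-isometry f : X → X that is c-LS-Lipschitz' for some c < 1, and Y is a metric space with quasi-isometries u : X → Y, v : Y → X that are coarse inverses of each other and are both λ-LS-Lipschitz' for some λ > 0, then Y admits a self-quasi-isometry that is c''-LS-Lipschitz' for some c'' < 1. -/
private lemma lip_comp' {X Y Z : Type*} [MetricSpace X] [MetricSpace Y] [MetricSpace Z]
    (p : X → Y) (q : Y → Z) (c1 C1 c2 C2 : ℝ) (hc2 : 0 ≤ c2)
    (hp : ∀ x x', dist (p x) (p x') ≤ max (c1 * dist x x') C1)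
    (hq : ∀ y y', dist (q y) (q y') ≤ max (c2 * dist y y') C2) :
    ∀ x x', dist (q (p x)) (q (p x')) ≤ max (c2 * c1 * dist x x') (max (c2 * C1) C2) := by
  intro x x'
  calc dist (q (p x)) (q (p x')) ≤ max (c2 * dist (p x) (p x')) C2 := hq _ _
    _ ≤ max (c2 * max (c1 * dist x x') C1) C2 :=
        max_le_max (mul_le_mul_of_nonneg_left (hp x x') hc2) le_rfl
    _ = max (max (c2 * (c1 * dist x x')) (c2 * C1)) C2 := by rw [mul_max_of_nonneg _ _ hc2]
    _ = max (c2 * c1 * dist x x') (max (c2 * C1) C2) := by rw [max_assoc, mul_assoc]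

private lemma low_comp' {X Y Z : Type*} [MetricSpace X] [MetricSpace Y] [MetricSpace Z]
    (p : X → Y) (q : Y → Z) (b B a A : ℝ) (hb : 0 < b) (ha : 0 < a)
    (hp : ∀ x x', b⁻¹ * dist x x' - B ≤ dist (p x) (p x'))
    (hq : ∀ y y', a⁻¹ * dist y y' - A ≤ dist (q y) (q y')) :
    ∀ x x', (a * b)⁻¹ * dist x x' - (a⁻¹ * B + A) ≤ dist (q (p x)) (q (p x')) := by
  intro x x'
  have h1 := hq (p x) (p x')
  have h2 := hp x x'
  have ha' : (0:ℝ) ≤ a⁻¹ := by positivity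
  have h3 := mul_le_mul_of_nonneg_left h2 ha'
  have h4 : a⁻¹ * (b⁻¹ * dist x x' - B) - A ≤ dist (q (p x)) (q (p x')) := by
    refine le_trans ?_ h1; linarith
  rw [mul_inv]
  linarith [h4]

/-- Being large-scale contractable is a quasi-isometry invariant. -/
theorem stmt11 {X Y : Type*} [MetricSpace X] [MetricSpace Y]
    (f : X → X) (c : ℝ) (hc0 : 0 ≤ c) (hc1 : c < 1)
    (hfqi : ∃ a A : ℝ, 0 < a ∧ (∀ x x', a⁻¹ * dist x x' - A ≤ dist (f x) (f x')) ∧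
      ∀ x : X, ∃ x', dist x (f x') ≤ A)
    (hflip : ∃ C : ℝ, ∀ x x', dist (f x) (f x') ≤ max (c * dist x x') C)
    (u : X → Y) (v : Y → X) (lam : ℝ) (hlam : 0 < lam)
    (hu : ∃ Cu : ℝ, ∀ x x', dist (u x) (u x') ≤ max (lam * dist x x') Cu)
    (hv : ∃ Cv : ℝ, ∀ y y', dist (v y) (v y') ≤ max (lam * dist y y') Cv)
    (hinv : ∃ K : ℝ, (∀ x, dist (v (u x)) x ≤ K) ∧ ∀ y, dist (u (v y)) y ≤ K)
    (huqi : ∃ a A : ℝ, 0 < a ∧ (∀ x x', a⁻¹ * dist x x' - A ≤ dist (u x) (u x')) ∧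
      ∀ y : Y, ∃ x, dist y (u x) ≤ A)
    (hvqi : ∃ a A : ℝ, 0 < a ∧ (∀ y y', a⁻¹ * dist y y' - A ≤ dist (v y) (v y')) ∧
      ∀ x : X, ∃ y, dist x (v y) ≤ A) :
    ∃ (g : Y → Y) (c'' : ℝ), c'' < 1 ∧
      (∃ C'' : ℝ, ∀ y y', dist (g y) (g y') ≤ max (c'' * dist y y') C'') ∧
      (∃ a A : ℝ, 0 < a ∧ (∀ y y', a⁻¹ * dist y y' - A ≤ dist (g y) (g y')) ∧
        ∀ y : Y, ∃ y', dist y (g y') ≤ A) := by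
  obtain ⟨af, Af, haf, hflow, hfsurj⟩ := hfqi
  obtain ⟨C, hfC⟩ := hflip
  obtain ⟨Cu, huC⟩ := hu
  obtain ⟨Cv, hvC⟩ := hv
  obtain ⟨au, Au, hau, hulow, husurj⟩ := huqi
  obtain ⟨av, Av, hav, hvlow, hvsurj⟩ := hvqi
  -- choose n with c^n * lam^2 < 1
  have hlam2 : (0:ℝ) < lam ^ 2 := by positivity
  obtain ⟨n, hn⟩ := exists_pow_lt_of_lt_one (show (0:ℝ) < (lam ^ 2)⁻¹ by positivity) hc1
  have hcn : c ^ n * lam ^ 2 < 1 := by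
    have := mul_lt_mul_of_pos_right hn hlam2
    rwa [inv_mul_cancel₀ (ne_of_gt hlam2)] at this
  have hcn0 : (0:ℝ) ≤ c ^ n := by positivity
  -- f^[n] is (c^n, Cn)-Lipschitz'
  have hiterlip : ∀ m : ℕ, ∃ Cm : ℝ,
      ∀ x x', dist (f^[m] x) (f^[m] x') ≤ max (c ^ m * dist x x') Cm := by
    intro m
    induction m with
    | zero => exact ⟨0, fun x x' => by simp⟩
    | succ k ih =>
      obtain ⟨Ck, hCk⟩ := ih
      refine ⟨max (c * Ck) C, fun x x' => ?_⟩
      have := lip_comp' (f^[k]) f (c ^ k) Ck c C hc0 hCk hfC x x'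
      rw [Function.iterate_succ_apply', Function.iterate_succ_apply']
      calc dist (f (f^[k] x)) (f (f^[k] x')) ≤ max (c * c ^ k * dist x x') (max (c * Ck) C) := this
        _ = max (c ^ (k+1) * dist x x') (max (c * Ck) C) := by ring_nf
  -- f^[n] lower bound
  have hiterlow : ∀ m : ℕ, ∃ b B : ℝ, 0 < b ∧
      ∀ x x', b⁻¹ * dist x x' - B ≤ dist (f^[m] x) (f^[m] x') := by
    intro m
    induction m with
    | zero => exact ⟨1, 0, one_pos, fun x x' => by simp⟩
    | succ k ih =>
      obtain ⟨b, B, hb, hB⟩ := ih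
      refine ⟨af * b, af⁻¹ * B + Af, by positivity, fun x x' => ?_⟩
      have := low_comp' (f^[k]) f b B af Af hb haf hB hflow x x'
      rw [Function.iterate_succ_apply', Function.iterate_succ_apply']
      exact this
  -- f^[n] coarse surjectivity
  have hitersurj : ∀ m : ℕ, ∃ B : ℝ, ∀ x : X, ∃ z, dist x (f^[m] z) ≤ B := by
    intro m
    induction m with
    | zero => exact ⟨0, fun x => ⟨x, by simp⟩⟩
    | succ k ih =>
      obtain ⟨B, hB⟩ := ih
      refine ⟨Af + max (c * B) C, fun x => ?_⟩
      obtain ⟨z, hz⟩ := hfsurj x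
      obtain ⟨w, hw⟩ := hB z
      refine ⟨w, ?_⟩
      rw [Function.iterate_succ_apply']
      calc dist x (f (f^[k] w)) ≤ dist x (f z) + dist (f z) (f (f^[k] w)) := dist_triangle _ _ _
        _ ≤ Af + max (c * dist z (f^[k] w)) C := add_le_add hz (hfC _ _)
        _ ≤ Af + max (c * B) C :=
            add_le_add le_rfl (max_le_max (mul_le_mul_of_nonneg_left hw hc0) le_rfl)
  obtain ⟨Cn, hCn⟩ := hiterlip n
  obtain ⟨bn, Bn, hbn, hBn⟩ := hiterlow n
  obtain ⟨Sn, hSn⟩ := hitersurj n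
  -- the candidate map
  refine ⟨fun y => u (f^[n] (v y)), lam * (c ^ n * lam), ?_, ?_, ?_⟩
  · nlinarith [hcn]
  · -- upper bound
    have h1 := lip_comp' v (f^[n]) lam Cv (c ^ n) Cn hcn0 hvC hCn
    have h2 := lip_comp' (fun y => f^[n] (v y)) u (c ^ n * lam) (max (c ^ n * Cv) Cn) lam Cu
      hlam.le h1 huC
    exact ⟨max (lam * max (c ^ n * Cv) Cn) Cu, h2⟩
  · -- lower bound and coarse surjectivity
    have h1 := low_comp' v (f^[n]) av Av bn Bn hav hbn hvlow hBn
    have h2 := low_comp' (fun y => f^[n] (v y)) u (bn * av) (bn⁻¹ * Av + Bn) au Au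
      (by positivity) hau h1 hulow
    set Alow := au⁻¹ * (bn⁻¹ * Av + Bn) + Au with hAlow
    set Asurj := Au + max (lam * (Sn + max (c ^ n * Av) Cn)) Cu with hAsurj
    refine ⟨au * (bn * av), max Alow Asurj, by positivity, fun y y' => ?_, fun y => ?_⟩
    · calc (au * (bn * av))⁻¹ * dist y y' - max Alow Asurj
          ≤ (au * (bn * av))⁻¹ * dist y y' - Alow :=
            sub_le_sub_left (le_max_left Alow Asurj) _
        _ ≤ _ := h2 y y'
    · obtain ⟨x, hx⟩ := husurj y
      obtain ⟨z, hz⟩ := hSn x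
      obtain ⟨y', hy'⟩ := hvsurj z
      refine ⟨y', ?_⟩
      have hd : dist x (f^[n] (v y')) ≤ Sn + max (c ^ n * Av) Cn := by
        calc dist x (f^[n] (v y')) ≤ dist x (f^[n] z) + dist (f^[n] z) (f^[n] (v y')) :=
              dist_triangle _ _ _
          _ ≤ Sn + max (c ^ n * dist z (v y')) Cn := add_le_add hz (hCn _ _)
          _ ≤ Sn + max (c ^ n * Av) Cn :=
              add_le_add le_rfl (max_le_max (mul_le_mul_of_nonneg_left hy' hcn0) le_rfl)
      have : dist y (u (f^[n] (v y'))) ≤ Asurj := by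
        calc dist y (u (f^[n] (v y')))
            ≤ dist y (u x) + dist (u x) (u (f^[n] (v y'))) := dist_triangle _ _ _
          _ ≤ Au + max (lam * dist x (f^[n] (v y'))) Cu := add_le_add hx (huC _ _)
          _ ≤ Au + max (lam * (Sn + max (c ^ n * Av) Cn)) Cu :=
              add_le_add le_rfl (max_le_max (mul_le_mul_of_nonneg_left hd hlam.le) le_rfl)
      exact this.trans (le_max_right Alow Asurj)
end

section
/- Let X be a metric space, f : X → X a (c,C)-Lipschitz' map with 0 < c < 1. If z, z' ∈ X satisfy d(z, f(z)) ≤ C, d(z', f(z')) ≤ C, and d(z, z') ≥ c^{−1}·C, then d(f(z), f(z')) ≤ 2cC/(1 − c). -/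
/-- Two C-almost-fixed points of a (c,C)-Lipschitz' contraction which are far
apart have nearby images: `d(f z, f z') ≤ 2cC/(1-c)`. -/
theorem stmt13 {X : Type*} [MetricSpace X] (f : X → X) (c C : ℝ)
    (hc0 : 0 < c) (hc1 : c < 1)
    (hf : ∀ x x', dist (f x) (f x') ≤ max (c * dist x x') C)
    (z z' : X) (hz : dist z (f z) ≤ C) (hz' : dist z' (f z') ≤ C)
    (hd : c⁻¹ * C ≤ dist z z') :
    dist (f z) (f z') ≤ 2 * c * C / (1 - c) := by
  have hC : C ≤ c * dist z z' := by
    have := mul_le_mul_of_nonneg_left hd hc0.le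
    rwa [← mul_assoc, mul_inv_cancel₀ hc0.ne', one_mul] at this
  have h1 : dist (f z) (f z') ≤ c * dist z z' := by
    have := hf z z'
    rwa [max_eq_left hC] at this
  have h2 : dist z z' ≤ dist z (f z) + dist (f z) (f z') + dist (f z') z' :=
    dist_triangle4 z (f z) (f z') z'
  have h3 : dist (f z') z' ≤ C := by rw [dist_comm]; exact hz'
  have key : (1 - c) * dist (f z) (f z') ≤ 2 * c * C := by nlinarith
  rw [le_div_iff₀ (by linarith : (0:ℝ) < 1 - c)]
  linarith
end

section
/- Let X be a nonempty connected graph of bounded degree (viewed as a metric space with the path metric on vertices). If X admits a self-quasi-isometry f that is (c,C)-Lipschitz' with c < 1, then X has polynomial growth: there exist constants A, D such that the cardinality of every centered ball of radius R is at most A·R^D for all R ≥ 1. -/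
open Set

private lemma ball_bound15 {V : Type*} (G : SimpleGraph V) (hconn : G.Connected)
    (δ : ℕ) (hfin : ∀ v : V, (G.neighborSet v).Finite)
    (hdeg : ∀ v : V, (G.neighborSet v).ncard ≤ δ) (x : V) :
    ∀ n : ℕ, ({u : V | G.dist x u ≤ n}).Finite ∧
      ({u : V | G.dist x u ≤ n}).ncard ≤ (δ + 1) ^ n := by
  intro n
  induction n with
  | zero =>
    have h : {u : V | G.dist x u ≤ 0} = {x} := by
      ext u
      simp only [Set.mem_setOf_eq, Nat.le_zero, hconn.dist_eq_zero_iff, Set.mem_singleton_iff]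
      exact eq_comm
    rw [h]; simp
  | succ n ih =>
    classical
    obtain ⟨hBfin, hBcard⟩ := ih
    set B := {u : V | G.dist x u ≤ n} with hB
    have hsub : {u : V | G.dist x u ≤ n + 1} ⊆ B ∪ ⋃ w ∈ B, G.neighborSet w := by
      intro u hu
      simp only [Set.mem_setOf_eq] at hu
      by_cases h : G.dist x u ≤ n
      · exact Or.inl h
      · right
        have hne : G.dist u x ≠ 0 := by rw [SimpleGraph.dist_comm]; omega
        obtain ⟨p, hp⟩ := SimpleGraph.exists_walk_of_dist_ne_zero hne
        have hnil : ¬ p.Nil := by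
          rw [SimpleGraph.Walk.not_nil_iff_lt_length, hp]; omega
        obtain ⟨w, hadj, q, rfl⟩ := SimpleGraph.Walk.not_nil_iff.mp hnil
        have hqlen : q.length = n := by
          have h1 : G.dist u x = G.dist x u := SimpleGraph.dist_comm
          simp only [SimpleGraph.Walk.length_cons] at hp
          omega
        have hwB : w ∈ B := by
          have := SimpleGraph.dist_le q
          simp only [hB, Set.mem_setOf_eq, SimpleGraph.dist_comm (u := x)]
          omega
        exact Set.mem_biUnion hwB (hadj.symm : G.Adj w u)
    have hU : (⋃ w ∈ B, G.neighborSet w).Finite := hBfin.biUnion (fun w _ => hfin w)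
    have hfin' : {u : V | G.dist x u ≤ n + 1}.Finite := (hBfin.union hU).subset hsub
    refine ⟨hfin', ?_⟩
    have hUcard : (⋃ w ∈ B, G.neighborSet w).ncard ≤ δ * B.ncard := by
      have heq : (⋃ w ∈ B, G.neighborSet w) =
          ↑(hBfin.toFinset.biUnion (fun w => (hfin w).toFinset)) := by
        ext u; simp
      rw [heq, Set.ncard_coe_finset]
      calc (hBfin.toFinset.biUnion fun w => (hfin w).toFinset).card
          ≤ ∑ w ∈ hBfin.toFinset, ((hfin w).toFinset).card := Finset.card_biUnion_le
        _ ≤ ∑ _w ∈ hBfin.toFinset, δ := Finset.sum_le_sum (fun w _ => by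
            rw [← Set.ncard_eq_toFinset_card _ (hfin w)]; exact hdeg w)
        _ = δ * B.ncard := by
            rw [Finset.sum_const, smul_eq_mul, Set.ncard_eq_toFinset_card _ hBfin, mul_comm]
    calc ({u : V | G.dist x u ≤ n + 1}).ncard
        ≤ (B ∪ ⋃ w ∈ B, G.neighborSet w).ncard :=
          Set.ncard_le_ncard hsub (hBfin.union hU)
      _ ≤ B.ncard + (⋃ w ∈ B, G.neighborSet w).ncard := Set.ncard_union_le _ _
      _ ≤ B.ncard + δ * B.ncard := by omega
      _ = (δ + 1) * B.ncard := by ring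
      _ ≤ (δ + 1) * (δ + 1) ^ n := Nat.mul_le_mul_left _ hBcard
      _ = (δ + 1) ^ (n + 1) := by ring

private lemma fiber_count15 {α β : Type*} {s : Set α} {t : Set β} (hs : s.Finite) (ht : t.Finite)
    {f : α → β} (hmap : ∀ x ∈ s, f x ∈ t) {k : ℕ}
    (hfib : ∀ y, ({x ∈ s | f x = y}).ncard ≤ k) : s.ncard ≤ k * t.ncard := by
  classical
  rw [Set.ncard_eq_toFinset_card _ hs, Set.ncard_eq_toFinset_card _ ht]
  apply Finset.card_le_mul_card_image_of_maps_to
  · intro a ha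
    rw [hs.mem_toFinset] at ha
    rw [ht.mem_toFinset]
    exact hmap a ha
  · intro b _
    have heq : ({x ∈ s | f x = b}) = ↑(hs.toFinset.filter (fun a => f a = b)) := by
      ext u; simp
    have := hfib b
    rwa [heq, Set.ncard_coe_finset] at this

set_option maxHeartbeats 2000000 in
/-- A nonempty connected graph of bounded degree admitting a self-quasi-isometry
that is (c,C)-Lipschitz' with c < 1 has polynomial growth of balls. -/
theorem stmt15 {V : Type*} (G : SimpleGraph V) [Nonempty V] (hconn : G.Connected)
    (δ : ℕ) (hfin : ∀ v : V, (G.neighborSet v).Finite)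
    (hdeg : ∀ v : V, (G.neighborSet v).ncard ≤ δ)
    (f : V → V) (c C : ℝ) (hc0 : 0 ≤ c) (hc1 : c < 1) (hC : 0 < C)
    (hlip : ∀ x y : V, (G.dist (f x) (f y) : ℝ) ≤ max (c * G.dist x y) C)
    (hqi : ∃ a A : ℝ, 0 < a ∧ (∀ x y : V, a⁻¹ * G.dist x y - A ≤ (G.dist (f x) (f y) : ℝ)) ∧
      ∀ y : V, ∃ x : V, (G.dist y (f x) : ℝ) ≤ A)
    (x₀ : V) :
    ∃ A D : ℝ, ∀ R : ℝ, 1 ≤ R →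
      (({u : V | (G.dist x₀ u : ℝ) ≤ R}).ncard : ℝ) ≤ A * R ^ D := by
  classical
  obtain ⟨a, A0, ha, hlow, hsur⟩ := hqi
  -- A0 is nonnegative
  have hA0 : 0 ≤ A0 := by
    obtain ⟨x1, hx1⟩ := hsur x₀
    exact le_trans (Nat.cast_nonneg _) hx1
  -- replace c by c' = max c (1/2)
  set c' : ℝ := max c (1/2) with hc'def
  have hc'pos : 0 < c' := lt_of_lt_of_le (by norm_num) (le_max_right _ _)
  have hc'1 : c' < 1 := max_lt hc1 (by norm_num)
  have hlip' : ∀ x y : V, (G.dist (f x) (f y) : ℝ) ≤ max (c' * G.dist x y) C := by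
    intro x y
    refine le_trans (hlip x y) (max_le_max ?_ le_rfl)
    exact mul_le_mul_of_nonneg_right (le_max_left _ _) (Nat.cast_nonneg _)
  -- basic distance facts (real-valued)
  have htri : ∀ u v w : V, (G.dist u w : ℝ) ≤ G.dist u v + G.dist v w := by
    intro u v w; exact_mod_cast hconn.dist_triangle
  have hdsymm : ∀ u v : V, (G.dist u v : ℝ) = G.dist v u := by
    intro u v; exact_mod_cast (SimpleGraph.dist_comm : G.dist u v = _)
  -- fiber radius
  set r : ℕ := ⌈a * A0⌉₊ with hrdef
  set k : ℕ := (δ + 1) ^ r with hkdef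
  have hk1 : 1 ≤ k := Nat.one_le_pow _ _ (by omega)
  -- fiber bound: any set of points with a common f-image lies in a ball of radius r
  have hfiber : ∀ x y : V, f x = f y → G.dist x y ≤ r := by
    intro x y hxy
    have h1 := hlow x y
    rw [hxy] at h1
    simp only [SimpleGraph.dist_self, Nat.cast_zero] at h1
    have h2 : (G.dist x y : ℝ) ≤ a * A0 := by
      have hinv : a * a⁻¹ = 1 := mul_inv_cancel₀ ha.ne'
      have hd0 : (0:ℝ) ≤ (G.dist x y : ℝ) := Nat.cast_nonneg _
      nlinarith
    have h3 : (G.dist x y : ℝ) ≤ (r : ℝ) := le_trans h2 (Nat.le_ceil _)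
    exact_mod_cast h3
  -- Z sets
  set Z : ℕ → Set V := fun n => {x : V | (G.dist x (f x) : ℝ) ≤ c'⁻¹ ^ n * C} with hZdef
  set M : ℕ := ⌈3 * C / (1 - c')⌉₊ with hMdef
  set N₀ : ℕ := (δ + 1) ^ M with hN₀def
  have hZ0 : (Z 0).Finite ∧ (Z 0).ncard ≤ N₀ := by
    rcases Set.eq_empty_or_nonempty (Z 0) with h | ⟨z, hz⟩
    · rw [h]; simp
    · have hsub : Z 0 ⊆ {u : V | G.dist z u ≤ M} := by
        intro x hx
        simp only [hZdef, Set.mem_setOf_eq, pow_zero, one_mul] at hx hz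
        have h1 : (G.dist z x : ℝ) ≤ C + G.dist (f z) (f x) + C := by
          have t1 := htri z (f z) x
          have t2 := htri (f z) (f x) x
          have t3 := hdsymm (f x) x
          linarith
        have h2 : (G.dist z x : ℝ) ≤ C + (c' * G.dist z x + C) + C := by
          have := hlip' z x
          have hmax : max (c' * (G.dist z x : ℝ)) C ≤ c' * G.dist z x + C :=
            max_le (le_add_of_nonneg_right hC.le)
              (le_add_of_nonneg_left (mul_nonneg hc'pos.le (Nat.cast_nonneg _)))
          linarith
        have h3 : (G.dist z x : ℝ) ≤ 3 * C / (1 - c') := by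
          rw [le_div_iff₀ (by linarith : (0:ℝ) < 1 - c')]
          have hd0 : (0:ℝ) ≤ (G.dist z x : ℝ) := Nat.cast_nonneg _
          nlinarith
        have h4 : (G.dist z x : ℝ) ≤ (M : ℝ) := le_trans h3 (Nat.le_ceil _)
        exact_mod_cast h4
      obtain ⟨hbfin, hbcard⟩ := ball_bound15 G hconn δ hfin hdeg z M
      exact ⟨hbfin.subset hsub, le_trans (Set.ncard_le_ncard hsub hbfin) hbcard⟩
  -- fibers are finite and small
  have hfibset : ∀ (S : Set V) (y : V), ({x ∈ S | f x = y}).Finite ∧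
      ({x ∈ S | f x = y}).ncard ≤ k := by
    intro S y
    rcases Set.eq_empty_or_nonempty ({x ∈ S | f x = y}) with h | ⟨x', hx'⟩
    · rw [h]; simp
    · have hsub : {x ∈ S | f x = y} ⊆ {u : V | G.dist x' u ≤ r} := by
        intro x hx
        exact hfiber x' x (by rw [hx'.2, hx.2])
      obtain ⟨hbfin, hbcard⟩ := ball_bound15 G hconn δ hfin hdeg x' r
      exact ⟨hbfin.subset hsub, le_trans (Set.ncard_le_ncard hsub hbfin) hbcard⟩
  have hbinv : 1 < c'⁻¹ := (one_lt_inv₀ hc'pos).mpr hc'1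
  -- Z_n bounds
  have hZ : ∀ n : ℕ, (Z n).Finite ∧ (Z n).ncard ≤ k ^ n * N₀ := by
    intro n
    induction n with
    | zero => simpa using hZ0
    | succ n ih =>
      obtain ⟨hZnfin, hZncard⟩ := ih
      have hmap : ∀ x ∈ Z (n + 1), f x ∈ Z n := by
        intro x hx
        simp only [hZdef, Set.mem_setOf_eq] at hx ⊢
        have hcc : c' * c'⁻¹ = 1 := mul_inv_cancel₀ hc'pos.ne'
        have hstep : c' * (c'⁻¹ ^ (n + 1) * C) = c'⁻¹ ^ n * C := by
          rw [pow_succ]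
          calc c' * (c'⁻¹ ^ n * c'⁻¹ * C) = (c' * c'⁻¹) * (c'⁻¹ ^ n * C) := by ring
            _ = c'⁻¹ ^ n * C := by rw [hcc, one_mul]
        have h1 : (G.dist (f x) (f (f x)) : ℝ) ≤ max (c' * (c'⁻¹ ^ (n + 1) * C)) C := by
          refine le_trans (hlip' x (f x)) (max_le_max ?_ le_rfl)
          exact mul_le_mul_of_nonneg_left hx hc'pos.le
        have hCle : C ≤ c'⁻¹ ^ n * C :=
          le_mul_of_one_le_left hC.le (one_le_pow₀ hbinv.le)
        rw [hstep] at h1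
        calc (G.dist (f x) (f (f x)) : ℝ) ≤ max (c'⁻¹ ^ n * C) C := h1
          _ = c'⁻¹ ^ n * C := max_eq_left hCle
      have hfinZ : (Z (n + 1)).Finite := by
        have hsub : Z (n + 1) ⊆ ⋃ y ∈ Z n, {x ∈ Z (n + 1) | f x = y} := by
          intro x hx
          exact Set.mem_biUnion (hmap x hx) ⟨hx, rfl⟩
        exact (hZnfin.biUnion (fun y _ => (hfibset (Z (n + 1)) y).1)).subset hsub
      refine ⟨hfinZ, ?_⟩
      calc (Z (n + 1)).ncard ≤ k * (Z n).ncard :=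
          fiber_count15 hfinZ hZnfin hmap (fun y => (hfibset (Z (n + 1)) y).2)
        _ ≤ k * (k ^ n * N₀) := Nat.mul_le_mul_left _ hZncard
        _ = k ^ (n + 1) * N₀ := by ring
  -- final assembly
  set C₀ : ℝ := C + (G.dist x₀ (f x₀) : ℝ) with hC₀def
  have hC₀ : C ≤ C₀ := le_add_of_nonneg_right (Nat.cast_nonneg _)
  set D : ℝ := Real.logb c'⁻¹ k with hDdef
  have hk1R : (1 : ℝ) ≤ (k : ℝ) := by exact_mod_cast hk1
  have hD0 : 0 ≤ D := Real.logb_nonneg hbinv hk1R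
  refine ⟨(N₀ : ℝ) * k * ((2 + C₀) / C) ^ D, D, ?_⟩
  intro R hR
  set t : ℝ := (2 * R + C₀) / C with htdef
  have ht1 : 1 ≤ t := by
    rw [htdef, le_div_iff₀ hC]; linarith
  set n : ℕ := ⌈Real.logb c'⁻¹ t⌉₊ with hndef
  have hlogt0 : 0 ≤ Real.logb c'⁻¹ t := Real.logb_nonneg hbinv ht1
  have htn : t ≤ c'⁻¹ ^ n := by
    have h1 : Real.logb c'⁻¹ t ≤ (n : ℝ) := Nat.le_ceil _
    calc t = c'⁻¹ ^ (Real.logb c'⁻¹ t) :=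
        (Real.rpow_logb (by positivity) hbinv.ne' (by linarith)).symm
      _ ≤ c'⁻¹ ^ (n : ℝ) := Real.rpow_le_rpow_of_exponent_le hbinv.le h1
      _ = c'⁻¹ ^ n := Real.rpow_natCast _ n
  have hball : {u : V | (G.dist x₀ u : ℝ) ≤ R} ⊆ Z n := by
    intro u hu
    simp only [Set.mem_setOf_eq] at hu
    simp only [hZdef, Set.mem_setOf_eq]
    have h1 : (G.dist u (f u) : ℝ) ≤ G.dist u x₀ + G.dist x₀ (f x₀) + G.dist (f x₀) (f u) := by
      have t1 := htri u x₀ (f u)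
      have t2 := htri x₀ (f x₀) (f u)
      linarith
    have h2 : (G.dist (f x₀) (f u) : ℝ) ≤ c' * G.dist x₀ u + C := by
      refine le_trans (hlip' x₀ u) (max_le ?_ ?_)
      · exact le_add_of_nonneg_right hC.le
      · exact le_add_of_nonneg_left (mul_nonneg hc'pos.le (Nat.cast_nonneg _))
    have hd0 : (0 : ℝ) ≤ (G.dist x₀ u : ℝ) := Nat.cast_nonneg _
    have h3 : c' * (G.dist x₀ u : ℝ) ≤ R := by nlinarith
    have hud : (G.dist u x₀ : ℝ) = G.dist x₀ u := hdsymm u x₀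
    have h4 : (G.dist u (f u) : ℝ) ≤ 2 * R + C₀ := by
      rw [hC₀def]; linarith
    have h5 : 2 * R + C₀ ≤ c'⁻¹ ^ n * C := by
      have he : t * C = 2 * R + C₀ := div_mul_cancel₀ _ hC.ne'
      nlinarith
    linarith
  have hcard : ({u : V | (G.dist x₀ u : ℝ) ≤ R}).ncard ≤ k ^ n * N₀ :=
    le_trans (Set.ncard_le_ncard hball (hZ n).1) (hZ n).2
  have hN0R : (0 : ℝ) ≤ (N₀ : ℝ) := Nat.cast_nonneg _
  have hkn : ((k : ℝ)) ^ n ≤ (k : ℝ) * t ^ D := by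
    have hnle : (n : ℝ) ≤ Real.logb c'⁻¹ t + 1 := (Nat.ceil_lt_add_one hlogt0).le
    have e4 : (k : ℝ) ^ (Real.logb c'⁻¹ t) = t ^ D := by
      rw [hDdef, Real.rpow_def_of_pos (by linarith : (0 : ℝ) < (k : ℝ)),
        Real.rpow_def_of_pos (by linarith : (0 : ℝ) < t), Real.logb, Real.logb]
      ring_nf
    calc ((k : ℝ)) ^ n = (k : ℝ) ^ ((n : ℝ)) := (Real.rpow_natCast _ _).symm
      _ ≤ (k : ℝ) ^ (Real.logb c'⁻¹ t + 1) := Real.rpow_le_rpow_of_exponent_le hk1R hnle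
      _ = (k : ℝ) ^ (Real.logb c'⁻¹ t) * k := by rw [Real.rpow_add (by linarith), Real.rpow_one]
      _ = t ^ D * k := by rw [e4]
      _ = (k : ℝ) * t ^ D := mul_comm _ _
  have htD : t ^ D ≤ ((2 + C₀) / C) ^ D * R ^ D := by
    have htle : t ≤ ((2 + C₀) / C) * R := by
      have h6 : 2 * R + C₀ ≤ (2 + C₀) * R := by nlinarith
      calc t = (2 * R + C₀) / C := htdef
        _ ≤ ((2 + C₀) * R) / C := by gcongr
        _ = ((2 + C₀) / C) * R := by ring
    calc t ^ D ≤ (((2 + C₀) / C) * R) ^ D := Real.rpow_le_rpow (by linarith) htle hD0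
      _ = ((2 + C₀) / C) ^ D * R ^ D := Real.mul_rpow (by positivity) (by linarith)
  calc (({u : V | (G.dist x₀ u : ℝ) ≤ R}).ncard : ℝ)
      ≤ ((k ^ n * N₀ : ℕ) : ℝ) := by exact_mod_cast hcard
    _ = (k : ℝ) ^ n * N₀ := by push_cast; ring
    _ ≤ ((k : ℝ) * t ^ D) * N₀ := mul_le_mul_of_nonneg_right hkn hN0R
    _ ≤ ((k : ℝ) * (((2 + C₀) / C) ^ D * R ^ D)) * N₀ :=
        mul_le_mul_of_nonneg_right
          (mul_le_mul_of_nonneg_left htD (by linarith : (0 : ℝ) ≤ (k : ℝ))) hN0R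
    _ = ((N₀ : ℝ) * k * ((2 + C₀) / C) ^ D) * R ^ D := by ring
end

section
/- Let X be a metric space, f : X → X a (c,C)-Lipschitz' map with 0 < c < 1, and w : X → X a map with displacement at most k, i.e., d(x, w(x)) ≤ k for all x, where k ≥ c^{−1}C. Then for all n ≥ 0 and all x ∈ X: d(f^n(x), (f∘w)^n(x)) ≤ (c + c² + ⋯ + c^n)·k ≤ (c/(1−c))·k. -/
/-- Perturbing a (c,C)-Lipschitz' contraction by a boundedly displacing map
changes iterates by a boundedly controlled amount. -/
theorem stmt16 {X : Type*} [MetricSpace X] (f w : X → X) (c C k : ℝ)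
    (hc0 : 0 < c) (hc1 : c < 1) (hC : 0 < C)
    (hf : ∀ x x', dist (f x) (f x') ≤ max (c * dist x x') C)
    (hk : c⁻¹ * C ≤ k) (hw : ∀ x, dist x (w x) ≤ k) :
    ∀ (n : ℕ) (x : X),
      dist (f^[n] x) ((f ∘ w)^[n] x) ≤ (∑ i ∈ Finset.range n, c ^ (i + 1)) * k ∧
      dist (f^[n] x) ((f ∘ w)^[n] x) ≤ (c / (1 - c)) * k := by
  have hk0 : 0 ≤ k := le_trans (by positivity) hk
  have hCck : C ≤ c * k := by
    have := mul_le_mul_of_nonneg_left hk hc0.le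
    rwa [mul_inv_cancel_left₀ hc0.ne'] at this
  have h1c : (0:ℝ) < 1 - c := by linarith
  have hid : ∀ n : ℕ, c * (∑ i ∈ Finset.range n, c ^ (i + 1)) + c =
      ∑ i ∈ Finset.range (n + 1), c ^ (i + 1) := by
    intro n
    rw [Finset.sum_range_succ', Finset.mul_sum]
    simp only [pow_succ, pow_zero, one_mul]
    congr 1
    exact Finset.sum_congr rfl fun i _ => by ring
  have hsum : ∀ n : ℕ, (∑ i ∈ Finset.range n, c ^ (i + 1)) ≤ c / (1 - c) := by
    intro n
    have h2 : (∑ i ∈ Finset.range n, c ^ (i + 1)) = c * ∑ i ∈ Finset.range n, c ^ i := by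
      rw [Finset.mul_sum]; exact Finset.sum_congr rfl (fun i _ => by ring)
    rw [h2, geom_sum_eq (by linarith : c ≠ 1)]
    have h3 : (c ^ n - 1) / (c - 1) = (1 - c ^ n) / (1 - c) := by
      rw [div_eq_div_iff (by linarith) (by linarith)]; ring
    rw [h3, ← mul_div_assoc, div_le_div_iff₀ h1c h1c]
    have hpow : 0 ≤ c ^ n := pow_nonneg hc0.le n
    nlinarith [mul_nonneg (mul_nonneg hc0.le hpow) h1c.le]
  have main : ∀ (n : ℕ) (x : X),
      dist (f^[n] x) ((f ∘ w)^[n] x) ≤ (∑ i ∈ Finset.range n, c ^ (i + 1)) * k := by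
    intro n
    induction n with
    | zero => intro x; simp
    | succ n ih =>
      intro x
      rw [Function.iterate_succ_apply', Function.iterate_succ_apply']
      have key : dist (f (f^[n] x)) (f (w ((f ∘ w)^[n] x))) ≤
          max (c * dist (f^[n] x) (w ((f ∘ w)^[n] x))) C := hf _ _
      have hd : dist (f^[n] x) (w ((f ∘ w)^[n] x)) ≤
          (∑ i ∈ Finset.range n, c ^ (i + 1)) * k + k :=
        le_trans (dist_triangle _ ((f ∘ w)^[n] x) _) (add_le_add (ih x) (hw _))
      have hcS : c ≤ ∑ i ∈ Finset.range (n + 1), c ^ (i + 1) := by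
        have := Finset.single_le_sum (f := fun i => c ^ (i + 1))
          (fun i _ => pow_nonneg hc0.le _) (Finset.mem_range.2 (Nat.succ_pos n))
        simpa using this
      have hrhs : max (c * dist (f^[n] x) (w ((f ∘ w)^[n] x))) C ≤
          (∑ i ∈ Finset.range (n + 1), c ^ (i + 1)) * k := by
        apply max_le
        · calc c * dist (f^[n] x) (w ((f ∘ w)^[n] x))
              ≤ c * ((∑ i ∈ Finset.range n, c ^ (i + 1)) * k + k) :=
                mul_le_mul_of_nonneg_left hd hc0.le
            _ = (c * (∑ i ∈ Finset.range n, c ^ (i + 1)) + c) * k := by ring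
            _ = (∑ i ∈ Finset.range (n + 1), c ^ (i + 1)) * k := by rw [hid n]
        · calc C ≤ c * k := hCck
            _ ≤ (∑ i ∈ Finset.range (n + 1), c ^ (i + 1)) * k :=
                mul_le_mul_of_nonneg_right hcS hk0
      exact le_trans key hrhs
  intro n x
  exact ⟨main n x, le_trans (main n x) (mul_le_mul_of_nonneg_right (hsum n) hk0)⟩
end

section
/- Let X be an unbounded metric space and let f : X → X be a (c,C)-Lipschitz' map with c < 1. If f is simultaneously a b-LS-similarity and a b'-LS-similarity for b, b' ∈ (0,1), then b = b'. -/
/-- `Λ_t(x,x')`: the first time the iterates of `f` bring `x, x'` within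
distance `t`. -/
noncomputable def lamIdx {X : Type*} [MetricSpace X] (f : X → X) (t : ℝ) (x x' : X) : ℕ :=
  sInf {n : ℕ | dist (f^[n] x) (f^[n] x') ≤ t}

/-- `f` is a `b`-LS-similarity (relative to the constant `C`) if
`Λ_t − log⁺_{b⁻¹} d` is bounded for some `t ≥ C`. -/
noncomputable def IsLSSimilarity {X : Type*} [MetricSpace X] (f : X → X) (C b : ℝ) : Prop :=
  ∃ t : ℝ, C ≤ t ∧ ∃ B : ℝ, ∀ x x' : X,
    |(lamIdx f t x x' : ℝ) - max 0 (Real.logb b⁻¹ (dist x x'))| ≤ B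

/-- Auxiliary lemma: the WLOG version with `t1 ≤ t2`. The Lipschitz'
hypothesis is not needed. -/
lemma aux17 {X : Type*} [MetricSpace X]
    (hunb : ¬ Bornology.IsBounded (Set.univ : Set X)) (f : X → X)
    (b b' : ℝ) (hb0 : 0 < b) (hb1 : b < 1) (hb'0 : 0 < b') (hb'1 : b' < 1)
    (t1 t2 : ℝ) (ht : t1 ≤ t2) (B1 B2 : ℝ)
    (H1 : ∀ x x', |(lamIdx f t1 x x' : ℝ) - max 0 (Real.logb b⁻¹ (dist x x'))| ≤ B1)
    (H2 : ∀ x x', |(lamIdx f t2 x x' : ℝ) - max 0 (Real.logb b'⁻¹ (dist x x'))| ≤ B2) :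
    b = b' := by
  have hb1' : 1 < b⁻¹ := (one_lt_inv₀ hb0).mpr hb1
  have hb1'' : 1 < b'⁻¹ := (one_lt_inv₀ hb'0).mpr hb'1
  have hlb : 0 < Real.log b⁻¹ := Real.log_pos hb1'
  have hlb' : 0 < Real.log b'⁻¹ := Real.log_pos hb1''
  have hX : Nonempty X := by
    by_contra h
    apply hunb
    rw [Set.univ_eq_empty_iff.mpr (not_nonempty_iff.mp h)]
    exact Bornology.isBounded_empty
  obtain ⟨x0⟩ := hX
  have hB1 : 0 ≤ B1 := le_trans (abs_nonneg _) (H1 x0 x0)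
  have hB2 : 0 ≤ B2 := le_trans (abs_nonneg _) (H2 x0 x0)
  by_contra hne
  have hlog_ne : Real.log b⁻¹ ≠ Real.log b'⁻¹ := by
    intro h
    exact hne (inv_injective (Real.log_injOn_pos (Set.mem_Ioi.mpr (by positivity))
      (Set.mem_Ioi.mpr (by positivity)) h))
  have hinv_ne : (Real.log b⁻¹)⁻¹ ≠ (Real.log b'⁻¹)⁻¹ := fun h => hlog_ne (inv_injective h)
  have hα : 1 / Real.log b⁻¹ - 1 / Real.log b'⁻¹ ≠ 0 := by
    simpa [one_div] using sub_ne_zero.mpr hinv_ne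
  obtain ⟨K, hKdef⟩ : ∃ K : ℝ, K = max 0 (Real.logb b⁻¹ t2) + B1 := ⟨_, rfl⟩
  have hK : 0 ≤ K := by rw [hKdef]; exact add_nonneg (le_max_left _ _) hB1
  obtain ⟨A, hAdef⟩ : ∃ A : ℝ, A = |1 / Real.log b⁻¹ - 1 / Real.log b'⁻¹| := ⟨_, rfl⟩
  have hApos : 0 < A := by rw [hAdef]; exact abs_pos.mpr hα
  obtain ⟨M, hMdef⟩ : ∃ M : ℝ,
      M = max 1 (max ((B1 + 1) * Real.log b⁻¹) ((B1 + B2 + K + 1) / A)) := ⟨_, rfl⟩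
  obtain ⟨x, x', hd⟩ : ∃ x x', Real.exp M < dist x x' := by
    rw [Metric.isBounded_iff] at hunb
    push_neg at hunb
    obtain ⟨x, -, y, -, h⟩ := hunb (Real.exp M)
    exact ⟨x, y, h⟩
  have hM1 : (1:ℝ) ≤ M := by rw [hMdef]; exact le_max_left _ _
  have hdpos : 0 < dist x x' := lt_trans (Real.exp_pos M) hd
  have hlogd : M < Real.log (dist x x') := (Real.lt_log_iff_exp_lt hdpos).mpr hd
  have hlogdpos : 0 < Real.log (dist x x') := by linarith
  have hL : B1 + 1 < Real.logb b⁻¹ (dist x x') := by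
    rw [Real.logb, lt_div_iff₀ hlb]
    calc (B1 + 1) * Real.log b⁻¹ ≤ M := by
          rw [hMdef]; exact le_trans (le_max_left _ _) (le_max_right 1 _)
      _ < Real.log (dist x x') := hlogd
  have hLpos : 0 < Real.logb b⁻¹ (dist x x') := by linarith
  have hL'pos : 0 < Real.logb b'⁻¹ (dist x x') := by
    rw [Real.logb]
    positivity
  -- nonemptiness of the t1 set
  have hS1 : {n : ℕ | dist (f^[n] x) (f^[n] x') ≤ t1}.Nonempty := by
    by_contra h
    rw [Set.not_nonempty_iff_eq_empty] at h
    have hz : lamIdx f t1 x x' = 0 := by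
      unfold lamIdx
      rw [h, Nat.sInf_empty]
    have h1 := abs_le.mp (H1 x x')
    rw [hz, max_eq_right hLpos.le] at h1
    have := h1.1
    push_cast at this
    linarith
  have hsub : {n : ℕ | dist (f^[n] x) (f^[n] x') ≤ t1} ⊆
      {n : ℕ | dist (f^[n] x) (f^[n] x') ≤ t2} := fun n hn => le_trans hn ht
  have hS2 : {n : ℕ | dist (f^[n] x) (f^[n] x') ≤ t2}.Nonempty := hS1.mono hsub
  obtain ⟨n, hndef⟩ : ∃ n : ℕ, n = lamIdx f t2 x x' := ⟨_, rfl⟩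
  have h21 : n ≤ lamIdx f t1 x x' := by
    rw [hndef]
    exact Nat.sInf_le (hsub (Nat.sInf_mem hS1))
  have hnS2 : dist (f^[n] x) (f^[n] x') ≤ t2 := by
    rw [hndef]
    exact Nat.sInf_mem hS2
  have hnle : ∀ m, m < n → ¬ dist (f^[m] x) (f^[m] x') ≤ t2 := by
    intro m hm
    rw [hndef] at hm
    exact Nat.notMem_of_lt_sInf hm
  obtain ⟨y, hydef⟩ : ∃ y : X, y = f^[n] x := ⟨_, rfl⟩
  obtain ⟨y', hy'def⟩ : ∃ y' : X, y' = f^[n] x' := ⟨_, rfl⟩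
  have hyy' : dist y y' ≤ t2 := by rw [hydef, hy'def]; exact hnS2
  have hiter : ∀ m : ℕ, f^[m] y = f^[n + m] x := by
    intro m
    rw [hydef, ← Function.iterate_add_apply, Nat.add_comm]
  have hiter' : ∀ m : ℕ, f^[m] y' = f^[n + m] x' := by
    intro m
    rw [hy'def, ← Function.iterate_add_apply, Nat.add_comm]
  have hS1' : {m : ℕ | dist (f^[m] y) (f^[m] y') ≤ t1}.Nonempty := by
    by_contra h
    rw [Set.not_nonempty_iff_eq_empty] at h
    obtain ⟨m, hm⟩ := hS1
    rcases lt_or_ge m n with hlt | hle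
    · exact hnle m hlt (le_trans hm ht)
    · have hmem : m - n ∈ {m : ℕ | dist (f^[m] y) (f^[m] y') ≤ t1} := by
        have e1 : f^[m - n] y = f^[m] x := by rw [hiter, Nat.add_sub_cancel' hle]
        have e2 : f^[m - n] y' = f^[m] x' := by rw [hiter', Nat.add_sub_cancel' hle]
        simpa [Set.mem_setOf_eq, e1, e2] using hm
      exact Set.notMem_empty _ (h ▸ hmem)
  have hm0 : dist (f^[lamIdx f t1 y y'] y) (f^[lamIdx f t1 y y'] y') ≤ t1 :=
    Nat.sInf_mem hS1'
  have h12 : lamIdx f t1 x x' ≤ n + lamIdx f t1 y y' := by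
    apply Nat.sInf_le
    show dist (f^[n + lamIdx f t1 y y'] x) (f^[n + lamIdx f t1 y y'] x') ≤ t1
    rw [← hiter, ← hiter']
    exact hm0
  -- bound lamIdx f t1 y y'
  have hmax_le : max 0 (Real.logb b⁻¹ (dist y y')) ≤ max 0 (Real.logb b⁻¹ t2) := by
    rcases eq_or_lt_of_le (dist_nonneg : (0:ℝ) ≤ dist y y') with h0 | h0
    · rw [← h0, Real.logb_zero]
      simp
    · exact max_le_max le_rfl (Real.logb_le_logb_of_le hb1' h0 hyy')
  have hm0K : (lamIdx f t1 y y' : ℝ) ≤ K := by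
    have h1 := abs_le.mp (H1 y y')
    rw [hKdef]
    linarith [h1.2, hmax_le]
  have e1 := abs_le.mp (H1 x x')
  have e2 := abs_le.mp (H2 x x')
  rw [max_eq_right hLpos.le] at e1
  rw [max_eq_right hL'pos.le] at e2
  rw [← hndef] at e2
  have hΛ1 : (lamIdx f t1 x x' : ℝ) ≤ (n : ℝ) + K := by
    have h := (Nat.cast_le (α := ℝ)).mpr h12
    push_cast at h
    linarith
  have hΛ2 : (n : ℝ) ≤ (lamIdx f t1 x x' : ℝ) := Nat.cast_le.mpr h21
  have key : |Real.logb b⁻¹ (dist x x') - Real.logb b'⁻¹ (dist x x')| ≤ B1 + B2 + K := by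
    rw [abs_le]
    constructor <;> linarith [e1.1, e1.2, e2.1, e2.2]
  have hLL' : Real.logb b⁻¹ (dist x x') - Real.logb b'⁻¹ (dist x x')
      = Real.log (dist x x') * (1 / Real.log b⁻¹ - 1 / Real.log b'⁻¹) := by
    rw [Real.logb, Real.logb]
    ring
  have hdiv : (B1 + B2 + K + 1) / A < Real.log (dist x x') := by
    refine lt_of_le_of_lt ?_ hlogd
    rw [hMdef]
    exact le_trans (le_max_right _ _) (le_max_right 1 _)
  have hmul : B1 + B2 + K + 1 < Real.log (dist x x') * A := (div_lt_iff₀ hApos).mp hdiv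
  have habs : |Real.logb b⁻¹ (dist x x') - Real.logb b'⁻¹ (dist x x')|
      = Real.log (dist x x') * A := by
    rw [hLL', abs_mul, abs_of_pos hlogdpos, hAdef]
  linarith [key, habs, hmul]

/-- On an unbounded space, the similarity constant of an LS-similarity is
unique. -/
theorem stmt17 {X : Type*} [MetricSpace X]
    (hunb : ¬ Bornology.IsBounded (Set.univ : Set X))
    (f : X → X) (c C : ℝ) (hc1 : c < 1)
    (hf : ∀ x x', dist (f x) (f x') ≤ max (c * dist x x') C)
    (b b' : ℝ) (hb0 : 0 < b) (hb1 : b < 1) (hb'0 : 0 < b') (hb'1 : b' < 1)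
    (h1 : IsLSSimilarity f C b) (h2 : IsLSSimilarity f C b') : b = b' := by
  obtain ⟨t1, -, B1, H1⟩ := h1
  obtain ⟨t2, -, B2, H2⟩ := h2
  rcases le_total t1 t2 with h | h
  · exact aux17 hunb f b b' hb0 hb1 hb'0 hb'1 t1 t2 h B1 B2 H1 H2
  · exact (aux17 hunb f b' b hb'0 hb'1 hb0 hb1 t2 t1 h B2 B1 H2 H1).symm
end
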